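/- arXiv:2501.04537 — 2 statements merged into one kernel-verified Lean document; each statement's English description precedes it below -/
import Mathlib

section
/- For a nonabelian group G, G is simple if and only if the diagonal subgroup {(g,g) : g ∈ G} is a maximal subgroup of G × G. -/
/-- The diagonal subgroup `{(g, g) : g ∈ G}` of `G × G`. -/
def diagonalSubgroup (G : Type*) [Group G] : Subgroup (G × G) :=
  (MonoidHom.prod (MonoidHom.id G) (MonoidHom.id G)).range

theorem isSimpleGroup_iff_diagonal_maximal (G : Type*) [Group G]
    (hna : ¬ ∀ a b : G, a * b = b * a) :
    IsSimpleGroup G ↔ IsCoatom (diagonalSubgroup G) := by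
  have hmem : ∀ p : G × G, p ∈ diagonalSubgroup G ↔ p.1 = p.2 := by
    intro p
    constructor
    · rintro ⟨g, rfl⟩; rfl
    · intro h
      exact ⟨p.1, by ext <;> simp [h]⟩
  constructor
  · intro hs
    constructor
    · intro htop
      obtain ⟨a, ha⟩ := exists_ne (1 : G)
      have : ((a, 1) : G × G) ∈ diagonalSubgroup G := htop ▸ Subgroup.mem_top _
      exact ha ((hmem _).1 this)
    · intro H hH
      obtain ⟨⟨a, b⟩, habH, habD⟩ := SetLike.exists_of_lt hH
      have hab : a ≠ b := fun h => habD ((hmem _).2 h)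
      have hDle : diagonalSubgroup G ≤ H := le_of_lt hH
      set N : Subgroup G := Subgroup.comap (MonoidHom.inl G G) H with hNdef
      have hNmem : ∀ g : G, g ∈ N ↔ ((g, 1) : G × G) ∈ H := fun g => Iff.rfl
      haveI hNnormal : N.Normal := by
        constructor
        intro n hn g
        have hgg : ((g, g) : G × G) ∈ H := hDle ((hmem _).2 rfl)
        have hn' : ((n, 1) : G × G) ∈ H := (hNmem n).1 hn
        have := H.mul_mem (H.mul_mem hgg hn') (H.inv_mem hgg)
        exact (hNmem _).2 (by simpa using this)
      have hNne : N ≠ ⊥ := by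
        intro hbot
        have hbb : ((b, b) : G × G) ∈ H := hDle ((hmem _).2 rfl)
        have h1 : ((a * b⁻¹, 1) : G × G) ∈ H := by
          have := H.mul_mem habH (H.inv_mem hbb)
          simpa using this
        have h2 : a * b⁻¹ ∈ N := (hNmem _).2 h1
        rw [hbot, Subgroup.mem_bot] at h2
        exact hab (mul_inv_eq_one.mp h2)
      have hNtop : N = ⊤ :=
        (hs.eq_bot_or_eq_top_of_normal N hNnormal).resolve_left hNne
      ext ⟨x, y⟩
      simp only [Subgroup.mem_top, iff_true]
      have h1 : x * y⁻¹ ∈ N := hNtop ▸ Subgroup.mem_top _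
      have h2 : ((x * y⁻¹, 1) : G × G) ∈ H := (hNmem _).1 h1
      have h3 : ((y, y) : G × G) ∈ H := hDle ((hmem _).2 rfl)
      have := H.mul_mem h2 h3
      simpa using this
  · rintro ⟨hne, hmax⟩
    haveI : Nontrivial G := by
      by_contra h
      rw [not_nontrivial_iff_subsingleton] at h
      apply hne
      ext p
      simp only [Subgroup.mem_top, iff_true]
      exact (hmem p).2 (Subsingleton.elim _ _)
    refine ⟨fun N hNnorm => ?_⟩
    by_cases hbot : N = ⊥
    · exact Or.inl hbot
    right
    rw [Subgroup.eq_bot_iff_forall] at hbot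
    push_neg at hbot
    obtain ⟨n, hnN, hn1⟩ := hbot
    let H : Subgroup (G × G) :=
      { carrier := {p | p.1 * p.2⁻¹ ∈ N}
        one_mem' := by simpa using N.one_mem
        mul_mem' := by
          rintro ⟨a, b⟩ ⟨c, d⟩ ha hc
          simp only [Set.mem_setOf_eq] at *
          have h1 : a * (c * d⁻¹) * a⁻¹ ∈ N := hNnorm.conj_mem _ hc a
          have h2 := N.mul_mem h1 ha
          show ((a, b) * (c, d)).1 * ((a, b) * (c, d)).2⁻¹ ∈ N
          simp only [Prod.mk_mul_mk, Prod.fst_mul, Prod.snd_mul]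
          convert h2 using 1
          group
        inv_mem' := by
          rintro ⟨a, b⟩ ha
          simp only [Set.mem_setOf_eq] at *
          have h1 : a⁻¹ * (a * b⁻¹)⁻¹ * a⁻¹⁻¹ ∈ N :=
            hNnorm.conj_mem _ (N.inv_mem ha) a⁻¹
          show ((a, b)⁻¹).1 * (((a, b)⁻¹).2)⁻¹ ∈ N
          simp only [Prod.inv_mk]
          convert h1 using 1
          group }
    have hHmem : ∀ p : G × G, p ∈ H ↔ p.1 * p.2⁻¹ ∈ N := fun p => Iff.rfl
    have hDH : diagonalSubgroup G < H := by
      refine lt_of_le_of_ne (fun p hp => ?_) (fun heq => ?_)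
      · rw [hHmem]
        rw [hmem] at hp
        simpa [hp] using N.one_mem
      · have : ((n, 1) : G × G) ∈ H := by
          rw [hHmem]; simpa using hnN
        rw [← heq, hmem] at this
        exact hn1 this
    have hHtop : H = ⊤ := hmax H hDH
    rw [Subgroup.eq_top_iff']
    intro x
    have : ((x, 1) : G × G) ∈ H := hHtop ▸ Subgroup.mem_top _
    rw [hHmem] at this
    simpa using this
end

section
/- Let G be a finite group with trivial solvable radical and suppose every maximal subgroup of G is either supersolvable or has prime or squared-prime index. Then G has a unique minimal normal subgroup. -/
/-- A group is supersolvable if it has a chain of subgroups from `⊥` to `⊤`,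
each normal in the whole group, with each successive factor cyclic
(i.e. each term is generated by the previous term together with one element). -/
def IsSupersolvable (G : Type*) [Group G] : Prop :=
  ∃ (n : ℕ) (s : Fin (n + 1) → Subgroup G),
    s 0 = ⊥ ∧ s (Fin.last n) = ⊤ ∧ (∀ i, (s i).Normal) ∧
    ∀ i : Fin n, ∃ x : G, s i.succ = s i.castSucc ⊔ Subgroup.closure {x}

/-!
Let `N` be a minimal normal subgroup, `K` a nontrivial normal subgroup with `N ⊓ K = ⊥`, `p` the
largest prime dividing `|N|` and `P` a Sylow `p`-subgroup of `N`. Since the solvable radical is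
trivial, `P` is not normal, so `N_G(P)` lies in a maximal subgroup `M`, and `M N = G` by the
Frattini argument. If `M` is supersolvable, then `G / N` is solvable and so is `K`, which embeds
in it. Otherwise `|G : M| = |N : N ⊓ M|` is `q` or `q²` for a prime `q ≤ p`, while
`|G : M| ≡ 1 (mod p)` because `N_N(P) ≤ N ⊓ M`; this forces `|G : M| = 4`, so `N` embeds in `S₄`
and is solvable. Hence two minimal normal subgroups always intersect, and so coincide.
-/

open Subgroup

theorem isSolvable_sup_closure_singleton {G : Type*} [Group G] (A : Subgroup G) [A.Normal]
    [Group.IsSolvable A] (x : G) : Group.IsSolvable ↥(A ⊔ closure {x}) := by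
  set B := A ⊔ closure {x}
  let f : B →* G ⧸ A := (QuotientGroup.mk' A).comp B.subtype
  have hrange : f.range = zpowers (x : G ⧸ A) := by
    rw [MonoidHom.range_comp, range_subtype, Subgroup.map_sup, QuotientGroup.map_mk'_self,
      bot_sup_eq, MonoidHom.map_closure, Set.image_singleton, ← zpowers_eq_closure]
    rfl
  have : Group.IsSolvable f.range := Group.isSolvable_of_comm <| by
    rw [hrange]
    exact IsMulCommutative.is_comm.comm
  refine Group.isSolvable_of_ker_le_range (inclusion (le_sup_left : A ≤ B)) f.rangeRestrict
    fun b hb => ?_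
  rw [MonoidHom.ker_rangeRestrict, MonoidHom.mem_ker] at hb
  exact ⟨⟨b, (QuotientGroup.eq_one_iff _).mp hb⟩, rfl⟩

theorem IsSupersolvable.isSolvable {G : Type*} [Group G] (h : IsSupersolvable G) :
    Group.IsSolvable G := by
  obtain ⟨n, s, h0, hn, hnormal, hstep⟩ := h
  suffices ∀ i, Group.IsSolvable (s i) from
    Group.isSolvable_of_surjective (f := (s (Fin.last n)).subtype)
      fun g => ⟨⟨g, by simp [hn]⟩, rfl⟩
  intro i
  induction i using Fin.induction with
  | zero => rw [h0]; infer_instance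
  | succ i ih =>
    obtain ⟨x, hx⟩ := hstep i
    have := hnormal i.castSucc
    rw [hx]
    exact isSolvable_sup_closure_singleton _ x

theorem alternatingGroup.isSolvable_of_card_eq_four {α : Type*} [DecidableEq α] [Fintype α]
    (hα : Nat.card α = 4) : Group.IsSolvable (alternatingGroup α) := by
  have := normal_kleinFour hα
  have hV : Nat.card (kleinFour α) = 2 ^ 2 := kleinFour_card_of_card_eq_four hα
  have hQ : Nat.card (alternatingGroup α ⧸ kleinFour α) = 3 ^ 1 := by
    have := (kleinFour α).card_eq_card_quotient_mul_card_subgroup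
    rw [card_of_card_eq_four hα, kleinFour_card_of_card_eq_four hα] at this
    omega
  have : Fact (Nat.Prime 3) := ⟨Nat.prime_three⟩
  have := (IsPGroup.of_card hV).isNilpotent
  have := (IsPGroup.of_card hQ).isNilpotent
  exact (Group.isSolvable_iff_subgroup_quotient (kleinFour α)).mpr ⟨inferInstance, inferInstance⟩

theorem Equiv.Perm.isSolvable_of_card_eq_four {α : Type*} [Finite α] (hα : Nat.card α = 4) :
    Group.IsSolvable (Equiv.Perm α) := by
  classical
  have := Fintype.ofFinite α
  have : Nontrivial α := Finite.one_lt_card_iff_nontrivial.mp (by omega)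
  have := alternatingGroup.isSolvable_of_card_eq_four hα
  have hQ : Nat.card (Equiv.Perm α ⧸ alternatingGroup α) = 2 ^ 1 := alternatingGroup.index_eq_two
  have := (IsPGroup.of_card hQ).isNilpotent
  exact (Group.isSolvable_iff_subgroup_quotient (alternatingGroup α)).mpr
    ⟨inferInstance, inferInstance⟩

theorem Nat.eq_four_of_modEq_one_of_prime_le {p q n : ℕ} (hp : p.Prime) (hq : q.Prime)
    (hqp : q ≤ p) (hn : n = q ∨ n = q ^ 2) (hmod : n ≡ 1 [MOD p]) : n = 4 := by
  have hq2 := hq.two_le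
  have not_dvd_pred : ¬ p ∣ q - 1 := fun h => by
    have := Nat.le_of_dvd (by omega) h
    omega
  have hdvd : p ∣ n - 1 :=
    (Nat.modEq_iff_dvd' (by rcases hn with rfl | rfl <;> nlinarith)).mp hmod.symm
  rcases hn with rfl | rfl
  · exact absurd hdvd not_dvd_pred
  have hsucc : p ∣ q + 1 := by
    rw [← one_pow 2, Nat.sq_sub_sq] at hdvd
    exact (hp.dvd_mul.mp hdvd).resolve_right not_dvd_pred
  have hpq : p = q + 1 := by
    rcases (Nat.le_of_dvd (by omega) hsucc).eq_or_lt with h | h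
    · exact h
    · have : p = q := by omega
      subst this
      exact absurd ((Nat.dvd_add_right dvd_rfl).mp hsucc) hp.not_dvd_one
  rcases hq.eq_two_or_odd' with rfl | hodd
  · rfl
  · have := (hp.even_iff).mp (hpq ▸ hodd.add_one)
    omega

theorem Nat.exists_prime_dvd_forall_prime_dvd_le {n : ℕ} (hn : 1 < n) :
    ∃ p, p.Prime ∧ p ∣ n ∧ ∀ q, q.Prime → q ∣ n → q ≤ p := by
  obtain ⟨p, hp, hmax⟩ := n.primeFactors.exists_max_image id (Nat.nonempty_primeFactors.mpr hn)
  refine ⟨p, Nat.prime_of_mem_primeFactors hp, Nat.dvd_of_mem_primeFactors hp, fun q hq hqn => ?_⟩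
  exact hmax q (Nat.mem_primeFactors.mpr ⟨hq, hqn, by omega⟩)

theorem Subgroup.relIndex_eq_index_of_sup_eq_top {G : Type*} [Group G] {M N : Subgroup G}
    [N.Normal] [N.FiniteIndex] (h : M ⊔ N = ⊤) : M.relIndex N = M.index := by
  have hM := relIndex_mul_index (inf_le_left : M ⊓ N ≤ M)
  have hN := relIndex_mul_index (inf_le_right : M ⊓ N ≤ N)
  rw [inf_relIndex_left, ← relIndex_sup_right, h, relIndex_top_right] at hM
  rw [inf_relIndex_right, ← hM, mul_comm] at hN
  exact Nat.eq_of_mul_eq_mul_left (Nat.pos_of_ne_zero FiniteIndex.index_ne_zero) hN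

theorem Sylow.index_modEq_one_of_normalizer_le {G : Type*} [Group G] [Finite G] {p : ℕ}
    [Fact p.Prime] (P : Sylow p G) {K : Subgroup G} (hK : normalizer (P : Set G) ≤ K) :
    K.index ≡ 1 [MOD p] := by
  -- `|G : N_G(P)|` and `|K : N_G(P)| = |K : N_K(P)|` count the Sylow `p`-subgroups of `G` and `K`.
  have hPK : (P : Subgroup G) ≤ K := le_normalizer.trans hK
  have hG : (normalizer (P : Set G)).index ≡ 1 [MOD p] :=
    P.card_eq_index_normalizer ▸ card_sylow_modEq_one p G
  have hK' : (normalizer (P : Set G)).relIndex K ≡ 1 [MOD p] := by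
    have : (normalizer ((P.subtype hPK : Subgroup K) : Set K)).index ≡ 1 [MOD p] :=
      (P.subtype hPK).card_eq_index_normalizer ▸ card_sylow_modEq_one p K
    rwa [Sylow.coe_subtype, ← subgroupOf_normalizer_eq hPK] at this
  calc K.index = K.index * 1 := (mul_one _).symm
    _ ≡ K.index * (normalizer (P : Set G)).relIndex K [MOD p] := hK'.symm.mul_left _
    _ = (normalizer (P : Set G)).index := by rw [mul_comm, relIndex_mul_index hK]
    _ ≡ 1 [MOD p] := hG

theorem Sylow.sup_eq_top_of_normalizer_map_le {G : Type*} [Group G] [Finite G] {p : ℕ}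
    [Fact p.Prime] {N : Subgroup G} [N.Normal] (P : Sylow p N) {M : Subgroup G}
    (hM : normalizer (P.map N.subtype : Set G) ≤ M) : M ⊔ N = ⊤ :=
  top_le_iff.mp ((Sylow.normalizer_sup_eq_top P).ge.trans (sup_le_sup_right hM N))

theorem Sylow.index_modEq_one_of_normalizer_map_le {G : Type*} [Group G] [Finite G] {p : ℕ}
    [Fact p.Prime] {N : Subgroup G} [N.Normal] (P : Sylow p N) {M : Subgroup G}
    (hM : normalizer (P.map N.subtype : Set G) ≤ M) : M.index ≡ 1 [MOD p] := by
  rw [← relIndex_eq_index_of_sup_eq_top (P.sup_eq_top_of_normalizer_map_le hM)]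
  refine P.index_modEq_one_of_normalizer_le ?_
  have hP : (P.map N.subtype).subgroupOf N = P :=
    comap_map_eq_self_of_injective N.subtype_injective _
  show normalizer ((P : Subgroup N) : Set N) ≤ _
  rw [← hP, ← subgroupOf_normalizer_eq (map_subtype_le _)]
  exact subgroupOf_mono N hM

theorem Subgroup.isSolvable_of_disjoint_ker {G H : Type*} [Group G] [Group H] [Group.IsSolvable H]
    {K : Subgroup G} (f : G →* H) (h : Disjoint K f.ker) : Group.IsSolvable K := by
  refine Group.isSolvable_of_isSolvable_injective (f := f.comp K.subtype) ?_
  rw [← MonoidHom.ker_eq_bot_iff, ← MonoidHom.comap_ker, ← subgroupOf, subgroupOf_eq_bot]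
  exact h.symm

theorem QuotientGroup.isSolvable_of_sup_eq_top {G : Type*} [Group G] {M N : Subgroup G} [N.Normal]
    [Group.IsSolvable M] (h : M ⊔ N = ⊤) : Group.IsSolvable (G ⧸ N) := by
  refine Group.isSolvable_of_surjective (f := (QuotientGroup.mk' N).comp M.subtype) ?_
  rw [← MonoidHom.range_eq_top, MonoidHom.range_comp, range_subtype,
    ← sup_bot_eq (Subgroup.map (QuotientGroup.mk' N) M), ← QuotientGroup.map_mk'_self N,
    ← Subgroup.map_sup, h, ← MonoidHom.range_eq_map, QuotientGroup.range_mk']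

def Subgroup.IsMinimalNormal {G : Type*} [Group G] (N : Subgroup G) : Prop :=
  N.Normal ∧ N ≠ ⊥ ∧ ∀ K : Subgroup G, K.Normal → K ≠ ⊥ → K ≤ N → K = N

namespace Subgroup.IsMinimalNormal

variable {G : Type*} [Group G] {N K : Subgroup G}

theorem le_of_inf_ne_bot (hN : N.IsMinimalNormal) [K.Normal] (h : N ⊓ K ≠ ⊥) : N ≤ K := by
  have := hN.1
  exact inf_eq_left.mp (hN.2.2 _ (normal_inf_normal N K) h inf_le_left)

theorem eq_of_inf_ne_bot (hN : N.IsMinimalNormal) (hK : K.IsMinimalNormal) (h : N ⊓ K ≠ ⊥) :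
    N = K := by
  have := hN.1
  have := hK.1
  exact le_antisymm (hN.le_of_inf_ne_bot h) (hK.le_of_inf_ne_bot (inf_comm N K ▸ h))

end Subgroup.IsMinimalNormal

theorem Subgroup.exists_isMinimalNormal (G : Type*) [Group G] [Finite G] [Nontrivial G] :
    ∃ N : Subgroup G, N.IsMinimalNormal := by
  obtain ⟨N, -, hN⟩ := exists_minimal_le_of_wellFoundedLT
    (fun K : Subgroup G => K.Normal ∧ K ≠ ⊥) ⊤ ⟨inferInstance, top_ne_bot⟩
  exact ⟨N, hN.1.1, hN.1.2, fun K hK hKb hKN => le_antisymm hKN (hN.2 ⟨hK, hKb⟩ hKN)⟩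

theorem Subgroup.IsMinimalNormal.inf_ne_bot {G : Type*} [Group G] [Finite G]
    (hrad : ∀ K : Subgroup G, K.Normal → Group.IsSolvable K → K = ⊥)
    (hmax : ∀ M : Subgroup G, IsCoatom M → IsSupersolvable M ∨
      ∃ q : ℕ, q.Prime ∧ (M.index = q ∨ M.index = q ^ 2))
    {N K : Subgroup G} (hN : N.IsMinimalNormal) [K.Normal] (hK : K ≠ ⊥) : N ⊓ K ≠ ⊥ := by
  intro hNK
  have := hN.1
  obtain ⟨p, hp, hpN, hp_max⟩ := Nat.exists_prime_dvd_forall_prime_dvd_le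
    ((one_lt_card_iff_ne_bot N).mpr hN.2.1)
  have : Fact p.Prime := ⟨hp⟩
  obtain ⟨P⟩ : Nonempty (Sylow p N) := inferInstance
  set Q := (P : Subgroup N).map N.subtype
  have hQ : normalizer (Q : Set G) ≠ ⊤ := fun htop => by
    have := (P.2.map N.subtype).isNilpotent
    exact P.ne_bot_of_dvd_card hpN <| (map_eq_bot_iff_of_injective _ N.subtype_injective).mp <|
      hrad Q (normalizer_eq_top_iff.mp htop) inferInstance
  obtain ⟨M, hM, hQM⟩ := (eq_top_or_exists_le_coatom _).resolve_left hQ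
  have hMN : M ⊔ N = ⊤ := P.sup_eq_top_of_normalizer_map_le hQM
  rcases hmax M hM with hM_ss | ⟨q, hq, hMq⟩
  · have := hM_ss.isSolvable
    have := QuotientGroup.isSolvable_of_sup_eq_top hMN
    refine hK (hrad K ‹_› (isSolvable_of_disjoint_ker (QuotientGroup.mk' N) ?_))
    rw [QuotientGroup.ker_mk', disjoint_iff, inf_comm, hNK]
  · have hqM : q ∣ M.index := by rcases hMq with h | h <;> simp [h]
    have hq_le : q ≤ p := hp_max q hq <| hqM.trans <|
      relIndex_eq_index_of_sup_eq_top hMN ▸ (M.subgroupOf N).index_dvd_card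
    have hM4 : M.index = 4 := Nat.eq_four_of_modEq_one_of_prime_le hp hq hq_le hMq
      (P.index_modEq_one_of_normalizer_map_le hQM)
    have := Equiv.Perm.isSolvable_of_card_eq_four (α := G ⧸ M) hM4
    have hN_core : ¬ N ≤ M.normalCore := fun hle =>
      hM.1 (top_le_iff.mp (hMN ▸ sup_le le_rfl (hle.trans M.normalCore_le)))
    refine hN.2.1 (hrad N ‹_› (isSolvable_of_disjoint_ker (MulAction.toPermHom G (G ⧸ M)) ?_))
    rw [← normalCore_eq_ker, disjoint_iff]
    by_contra hne
    exact hN_core (hN.le_of_inf_ne_bot hne)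

theorem existsUnique_minimal_normal (G : Type*) [Group G] [Finite G]
    (hrad : ∀ K : Subgroup G, K.Normal → IsSolvable K → K = ⊥)
    (h : ∀ M : Subgroup G, IsCoatom M → IsSupersolvable M ∨
      ∃ q : ℕ, q.Prime ∧ (M.index = q ∨ M.index = q ^ 2))
    (hG : ¬ IsSolvable G) :
    ∃! N : Subgroup G, N.Normal ∧ N ≠ ⊥ ∧
      ∀ K : Subgroup G, K.Normal → K ≠ ⊥ → K ≤ N → K = N := by
  have : Nontrivial G :=
    not_subsingleton_iff_nontrivial.mp fun _ => hG (inferInstance : Group.IsSolvable G)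
  obtain ⟨N, hN⟩ := Subgroup.exists_isMinimalNormal G
  refine ⟨N, hN, fun K hK => ?_⟩
  have := hK.1
  exact (hN.eq_of_inf_ne_bot hK (hN.inf_ne_bot hrad h hK.2.1)).symm
end
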